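/- arXiv:2401.17909 — 4 statements merged into one kernel-verified Lean document; each statement's English description precedes it below -/
import Mathlib

section
/- Let B be a binomially distributed random variable with parameters n ∈ ℕ and p ∈ (0, 1]. Then for every α ∈ (0, 1] and every m ∈ ℕ ∪ {0}, E(B^(-αm) · 1{B > 0}) ≤ ( 2^(m(m+1)/2) · [1 - (1-p)^(n+m)] / ( p^m · ∏_{i=1}^m (n+i) ) )^α ≤ 2^(α·m(m+1)/2) / (p·n)^(α·m), where the product ∏_{i=1}^m (n+i) is interpreted as 1 when m = 0. -/
/-!
For `k ≥ 1` we have `k + i ≤ 2 ^ i * k`, hence `k ^ (-m) ≤ 2 ^ (m (m + 1) / 2) / ∏_{i=1}^m (k + i)`.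
The identity `C(n, k) ∏_{i=1}^m (n + i) = C(n + m, k + m) ∏_{i=1}^m (k + i)` turns the expectation
of `1{B > 0} / ∏_{i=1}^m (B + i)` into `(p ^ m ∏_{i=1}^m (n + i))⁻¹` times the probability that a
Binomial(n + m, p) variable exceeds `m`, which is at most `1 - (1 - p) ^ (n + m)`. Jensen's
inequality for the concave map `x ↦ x ^ α` moves the exponent `α` outside the expectation, and
`n ^ m ≤ ∏_{i=1}^m (n + i)` gives the final bound.
-/

open Finset Real

theorem sum_Icc_one_id (m : ℕ) : ∑ i ∈ Icc 1 m, i = m * (m + 1) / 2 := by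
  have h : ∑ i ∈ range (m + 1), i = ∑ i ∈ Icc 1 m, i := by
    rw [range_eq_Ico, sum_eq_sum_Ico_succ_bot m.succ_pos, zero_add]
    rfl
  rw [← h, sum_range_id, Nat.add_sub_cancel, mul_comm]

section OrderedSemiring

variable {R : Type*} [CommSemiring R] [PartialOrder R] [IsOrderedRing R] {x : R}

theorem add_natCast_le_two_pow_mul (hx : 1 ≤ x) (i : ℕ) : x + i ≤ 2 ^ i * x := by
  have hi : ((i + 1 : ℕ) : R) ≤ 2 ^ i := by
    simpa only [Nat.cast_pow, Nat.cast_ofNat] using (Nat.mono_cast (α := R) i.lt_two_pow_self)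
  calc x + i ≤ x + i * x := add_le_add le_rfl (le_mul_of_one_le_right i.cast_nonneg hx)
    _ = ((i + 1 : ℕ) : R) * x := by push_cast; ring
    _ ≤ 2 ^ i * x := mul_le_mul_of_nonneg_right hi (zero_le_one.trans hx)

theorem prod_Icc_add_le_two_pow_mul_pow (hx : 1 ≤ x) (m : ℕ) :
    ∏ i ∈ Icc 1 m, (x + i) ≤ 2 ^ (m * (m + 1) / 2) * x ^ m := by
  calc ∏ i ∈ Icc 1 m, (x + i)
      ≤ ∏ i ∈ Icc 1 m, (2 ^ i * x) :=
        prod_le_prod (fun i _ => add_nonneg (zero_le_one.trans hx) i.cast_nonneg)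
          fun i _ => add_natCast_le_two_pow_mul hx i
    _ = 2 ^ (m * (m + 1) / 2) * x ^ m := by
        rw [prod_mul_distrib, prod_pow_eq_pow_sum, sum_Icc_one_id, prod_const, Nat.card_Icc,
          Nat.add_sub_cancel]

theorem pow_le_prod_Icc_add (hx : 0 ≤ x) (m : ℕ) : x ^ m ≤ ∏ i ∈ Icc 1 m, (x + i) := by
  calc x ^ m = ∏ _i ∈ Icc 1 m, x := by rw [prod_const, Nat.card_Icc, Nat.add_sub_cancel]
    _ ≤ ∏ i ∈ Icc 1 m, (x + i) :=
        prod_le_prod (fun _ _ => hx) fun i _ => le_add_of_nonneg_right i.cast_nonneg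

end OrderedSemiring

theorem choose_mul_prod_Icc_add (n m k : ℕ) :
    n.choose k * ∏ i ∈ Icc 1 m, (n + i) = (n + m).choose (k + m) * ∏ i ∈ Icc 1 m, (k + i) := by
  induction m with
  | zero => simp
  | succ m ih =>
    rw [prod_Icc_succ_top (by omega), prod_Icc_succ_top (by omega), ← mul_assoc, ih,
      ← add_assoc, ← add_assoc]
    calc _ = (∏ i ∈ Icc 1 m, (k + i)) * ((n + m + 1) * (n + m).choose (k + m)) := by ring
      _ = _ := by rw [Nat.add_one_mul_choose_eq]; ring

/-- `P(B = k)` for `B ∼ Binomial(n, p)`. -/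
def binomWeight {R : Type*} [CommRing R] (n : ℕ) (p : R) (k : ℕ) : R :=
  n.choose k * p ^ k * (1 - p) ^ (n - k)

section CommRing

variable {R : Type*} [CommRing R] (n : ℕ) (p : R)

theorem sum_binomWeight : ∑ k ∈ range (n + 1), binomWeight n p k = 1 := by
  have h := (add_pow p (1 - p) n).symm
  rw [add_sub_cancel, one_pow] at h
  rw [← h]
  exact sum_congr rfl fun k _ => by rw [binomWeight]; ring

@[simp] theorem binomWeight_zero : binomWeight n p 0 = (1 - p) ^ n := by
  simp [binomWeight]

end CommRing

theorem binomWeight_nonneg {p : ℝ} (hp0 : 0 ≤ p) (hp1 : p ≤ 1) (n k : ℕ) :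
    0 ≤ binomWeight n p k := by
  have : 0 ≤ 1 - p := sub_nonneg.mpr hp1
  unfold binomWeight; positivity

theorem sum_binomWeight_add_le {p : ℝ} (hp0 : 0 ≤ p) (hp1 : p ≤ 1) (n m : ℕ) :
    ∑ k ∈ range (n + 1), (if 0 < k then binomWeight (n + m) p (k + m) else 0)
      ≤ 1 - (1 - p) ^ (n + m) := by
  have hw := binomWeight_nonneg hp0 hp1 (n + m)
  calc ∑ k ∈ range (n + 1), (if 0 < k then binomWeight (n + m) p (k + m) else 0)
      = ∑ k ∈ range n, binomWeight (n + m) p (m + k + 1) := by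
        rw [sum_range_succ']
        simp only [Nat.succ_pos, if_true, lt_irrefl, if_false, add_zero]
        exact sum_congr rfl fun k _ => by rw [add_right_comm, add_comm k m]
    _ ≤ ∑ k ∈ range (m + n), binomWeight (n + m) p (k + 1) := by
        rw [sum_range_add]
        exact le_add_of_nonneg_left (sum_nonneg fun _ _ => hw _)
    _ = 1 - (1 - p) ^ (n + m) := by
        rw [eq_sub_iff_add_eq, add_comm m, ← binomWeight_zero, ← sum_range_succ',
          sum_binomWeight]

theorem inv_prod_mul_binomWeight {R : Type*} [Field R] [CharZero R] {p : R} (hp : p ≠ 0)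
    (n m k : ℕ) :
    (∏ i ∈ Icc 1 m, ((k : R) + i))⁻¹ * binomWeight n p k
      = binomWeight (n + m) p (k + m) / (p ^ m * ∏ i ∈ Icc 1 m, ((n : R) + i)) := by
  have hprod : ∀ x : ℕ, ∏ i ∈ Icc 1 m, ((x : R) + i) ≠ 0 := fun x =>
    prod_ne_zero_iff.mpr fun i hi => by
      exact_mod_cast (show x + i ≠ 0 by have := (mem_Icc.mp hi).1; omega)
  have hchoose : (n.choose k : R) * ∏ i ∈ Icc 1 m, ((n : R) + i)
      = (n + m).choose (k + m) * ∏ i ∈ Icc 1 m, ((k : R) + i) := by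
    exact_mod_cast choose_mul_prod_Icc_add n m k
  rw [binomWeight, binomWeight, Nat.add_sub_add_right, pow_add,
    eq_div_iff (mul_ne_zero (pow_ne_zero m hp) (hprod n)), inv_mul_eq_div, div_mul_eq_mul_div,
    div_eq_iff (hprod k)]
  linear_combination (p ^ k * p ^ m * (1 - p) ^ (n - k)) * hchoose

theorem sum_inv_prod_mul_binomWeight_le {p : ℝ} (hp0 : 0 < p) (hp1 : p ≤ 1) (n m : ℕ) :
    ∑ k ∈ range (n + 1),
        (if 0 < k then (∏ i ∈ Icc 1 m, ((k : ℝ) + i))⁻¹ else 0) * binomWeight n p k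
      ≤ (1 - (1 - p) ^ (n + m)) / (p ^ m * ∏ i ∈ Icc 1 m, ((n : ℝ) + i)) := by
  have hterm : ∀ k ∈ range (n + 1),
      (if 0 < k then (∏ i ∈ Icc 1 m, ((k : ℝ) + i))⁻¹ else 0) * binomWeight n p k
        = (if 0 < k then binomWeight (n + m) p (k + m) else 0)
          / (p ^ m * ∏ i ∈ Icc 1 m, ((n : ℝ) + i)) := fun k _ => by
    split_ifs
    · exact inv_prod_mul_binomWeight hp0.ne' n m k
    · rw [zero_mul, zero_div]
  rw [sum_congr rfl hterm, ← sum_div]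
  exact div_le_div_of_nonneg_right (sum_binomWeight_add_le hp0.le hp1 n m) (by positivity)

theorem rpow_neg_mul_le_rpow_div_prod_Icc_add {x α : ℝ} (hx : 1 ≤ x) (hα : 0 ≤ α) (m : ℕ) :
    x ^ (-(α * m)) ≤ (2 ^ (m * (m + 1) / 2) / ∏ i ∈ Icc 1 m, (x + i)) ^ α := by
  have hxm : 0 < x ^ m := by positivity
  have hprod : 0 < ∏ i ∈ Icc 1 m, (x + i) :=
    prod_pos fun i _ => by positivity
  rw [neg_mul_eq_mul_neg, mul_comm, rpow_mul (by positivity), rpow_neg (by positivity),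
    rpow_natCast]
  refine rpow_le_rpow (by positivity) ?_ hα
  rw [le_div_iff₀ hprod, inv_mul_le_iff₀ hxm, mul_comm]
  exact prod_Icc_add_le_two_pow_mul_pow hx m

theorem sum_rpow_neg_mul_binomWeight_le {p α : ℝ} (hp0 : 0 < p) (hp1 : p ≤ 1) (hα0 : 0 < α)
    (hα1 : α ≤ 1) (n m : ℕ) :
    ∑ k ∈ range (n + 1), (if 0 < k then (k : ℝ) ^ (-(α * m)) else 0) * binomWeight n p k
      ≤ (2 ^ (m * (m + 1) / 2) * (1 - (1 - p) ^ (n + m))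
          / (p ^ m * ∏ i ∈ Icc 1 m, ((n : ℝ) + i))) ^ α := by
  set x : ℕ → ℝ := fun k => if 0 < k then 2 ^ (m * (m + 1) / 2) / ∏ i ∈ Icc 1 m, ((k : ℝ) + i)
    else 0 with hx
  have hx0 : ∀ k, 0 ≤ x k := fun k => by
    simp only [hx]; split_ifs <;> positivity
  have hw := binomWeight_nonneg hp0.le hp1 n
  calc ∑ k ∈ range (n + 1), (if 0 < k then (k : ℝ) ^ (-(α * m)) else 0) * binomWeight n p k
      ≤ ∑ k ∈ range (n + 1), binomWeight n p k • x k ^ α := by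
        refine sum_le_sum fun k _ => ?_
        rw [smul_eq_mul, mul_comm]
        refine mul_le_mul_of_nonneg_left ?_ (hw k)
        simp only [hx]
        split_ifs with hk
        · exact rpow_neg_mul_le_rpow_div_prod_Icc_add (by exact_mod_cast hk) hα0.le m
        · rw [zero_rpow hα0.ne']
    _ ≤ (∑ k ∈ range (n + 1), binomWeight n p k • x k) ^ α :=
        (concaveOn_rpow hα0.le hα1).le_map_sum (fun k _ => hw k) (sum_binomWeight n p)
          fun k _ => hx0 k
    _ ≤ _ := by
        refine rpow_le_rpow (sum_nonneg fun k _ => mul_nonneg (hw k) (hx0 k)) ?_ hα0.le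
        have hterm : ∀ k ∈ range (n + 1), binomWeight n p k • x k = 2 ^ (m * (m + 1) / 2) *
            ((if 0 < k then (∏ i ∈ Icc 1 m, ((k : ℝ) + i))⁻¹ else 0) * binomWeight n p k) :=
          fun k _ => by simp only [hx, smul_eq_mul]; split_ifs <;> ring
        rw [sum_congr rfl hterm, ← mul_sum, mul_div_assoc]
        exact mul_le_mul_of_nonneg_left (sum_inv_prod_mul_binomWeight_le hp0 hp1 n m)
          (by positivity)

theorem rpow_mul_one_sub_pow_div_le {c p α : ℝ} (hc : 0 ≤ c) (hp0 : 0 < p) (hp1 : p ≤ 1)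
    (hα : 0 ≤ α) {n : ℕ} (hn : 1 ≤ n) (m : ℕ) :
    (c * (1 - (1 - p) ^ (n + m)) / (p ^ m * ∏ i ∈ Icc 1 m, ((n : ℝ) + i))) ^ α
      ≤ c ^ α / (p * n) ^ (α * m) := by
  have hpn : 0 < p * n := mul_pos hp0 (by exact_mod_cast hn)
  have hq : 0 ≤ (1 - p) ^ (n + m) := pow_nonneg (sub_nonneg.mpr hp1) _
  have hq1 : (1 - p) ^ (n + m) ≤ 1 := pow_le_one₀ (sub_nonneg.mpr hp1) (by linarith)
  have hle : c * (1 - (1 - p) ^ (n + m)) / (p ^ m * ∏ i ∈ Icc 1 m, ((n : ℝ) + i))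
      ≤ c / (p * n) ^ m := by
    refine div_le_div₀ hc (mul_le_of_le_one_right hc (by linarith)) (pow_pos hpn m) ?_
    rw [mul_pow]
    exact mul_le_mul_of_nonneg_left (pow_le_prod_Icc_add n.cast_nonneg m) (pow_nonneg hp0.le m)
  calc _ ≤ (c / (p * n) ^ m) ^ α :=
        rpow_le_rpow (div_nonneg (mul_nonneg hc (by linarith)) (by positivity)) hle hα
    _ = c ^ α / (p * n) ^ (α * m) := by
        rw [div_rpow hc (by positivity), ← rpow_natCast, ← rpow_mul hpn.le, mul_comm (m : ℝ)]

open Finset in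
/-- Negative-moment bound for a Binomial(n,p) random variable restricted to {B > 0}. -/
theorem stmt_2 (n : ℕ) (hn : 1 ≤ n) (p : ℝ) (hp0 : 0 < p) (hp1 : p ≤ 1)
    (α : ℝ) (hα0 : 0 < α) (hα1 : α ≤ 1) (m : ℕ) :
    (∑ k ∈ Finset.range (n + 1),
        (if 0 < k then ((k : ℝ) ^ (-(α * m)) : ℝ) else 0) *
          ((n.choose k : ℝ) * p ^ k * (1 - p) ^ (n - k)))
      ≤ ((2 ^ (m * (m + 1) / 2) * (1 - (1 - p) ^ (n + m)) /
            (p ^ m * ∏ i ∈ Finset.Icc 1 m, ((n : ℝ) + i))) ^ α : ℝ) ∧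
    ((2 ^ (m * (m + 1) / 2) * (1 - (1 - p) ^ (n + m)) /
          (p ^ m * ∏ i ∈ Finset.Icc 1 m, ((n : ℝ) + i))) ^ α : ℝ)
      ≤ (2 : ℝ) ^ (α * (m * (m + 1) / 2 : ℕ)) / (p * n) ^ (α * m) := by
  refine ⟨sum_rpow_neg_mul_binomWeight_le hp0 hp1 hα0 hα1 n m, ?_⟩
  rw [mul_comm α, rpow_mul zero_le_two, rpow_natCast]
  exact rpow_mul_one_sub_pow_div_le (by positivity) hp0 hp1 hα0.le hn m
end

section
/- With the notation of the mixture setting, for any two arrays F, F̃ of cdfs with probability mass functions p_{X,Z}, p̃_{X,Z} on 𝒳 × 𝒵, the aggregate discrepancy satisfies u(F, F̃) ≤ ∑_{z∈𝒵} p_Z(z) u_z(F, F̃) + ‖p_Z − p̃_Z‖₁ ≤ max_{z∈𝒵} u_z(F, F̃) + ‖p_Z − p̃_Z‖₁, where u_z(F, F̃) = ∑_{x∈𝒳} max_{i=1}^K ‖p_{X|Z=z}(x) F^i(·|x,z) − p̃_{X|Z=z}(x) F̃^i(·|x,z)‖_∞. -/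
/-- `F` is a cdf supported on `[a,b]`. -/
def IsCdfOn (a b : ℝ) (F : ℝ → ℝ) : Prop :=
  Monotone F ∧ (∀ y, y < a → F y = 0) ∧ (∀ y, b ≤ y → F y = 1) ∧
    (∀ y, 0 ≤ F y ∧ F y ≤ 1)

/-- Aggregate discrepancy `u(F,F̃) = ∑_x max_i ‖p_X(x)F^i(·|x) − p̃_X(x)F̃^i(·|x)‖_∞`. -/
noncomputable def uDisc {X Z : Type} [Fintype X] [Fintype Z] (K : ℕ)
    (F Ft : Fin K → X → Z → ℝ → ℝ) (p pt : X → Z → ℝ) : ℝ :=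
  ∑ x, ⨆ i : Fin K, ⨆ y : ℝ,
    |(∑ z, p x z * F i x z y) - ∑ z, pt x z * Ft i x z y|

/-- Subgroup discrepancy
`u_z(F,F̃) = ∑_x max_i ‖p_{X|Z=z}(x)F^i(·|x,z) − p̃_{X|Z=z}(x)F̃^i(·|x,z)‖_∞`. -/
noncomputable def uzDisc {X Z : Type} [Fintype X] [Fintype Z] (K : ℕ)
    (F Ft : Fin K → X → Z → ℝ → ℝ) (p pt : X → Z → ℝ) (z : Z) : ℝ :=
  ∑ x, ⨆ i : Fin K, ⨆ y : ℝ,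
    |(p x z / ∑ x', p x' z) * F i x z y - (pt x z / ∑ x', pt x' z) * Ft i x z y|

/-!
Write `p(x,z) = p_Z(z) · p_{X|Z=z}(x)` and likewise for `p̃`. For each `x`, `i` and `y`,
`p(x,z) F − p̃(x,z) F̃ = p_Z(z) (p_{X|Z=z}(x) F − p̃_{X|Z=z}(x) F̃) + (p_Z(z) − p̃_Z(z)) p̃_{X|Z=z}(x) F̃`,
and `0 ≤ F̃ ≤ 1`. Summing over `z`, taking suprema over `i, y` and summing over `x` gives the first
inequality, since `∑_x p̃_{X|Z=z}(x) ≤ 1`. The second holds because `p_Z` is a probability vector.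
-/

open Finset

lemma IsCdfOn.nonneg {a b : ℝ} {F : ℝ → ℝ} (hF : IsCdfOn a b F) (y : ℝ) : 0 ≤ F y :=
  (hF.2.2.2 y).1

lemma IsCdfOn.le_one {a b : ℝ} {F : ℝ → ℝ} (hF : IsCdfOn a b F) (y : ℝ) : F y ≤ 1 :=
  (hF.2.2.2 y).2

/-- With the convention `x / 0 = 0`, this also holds when the total mass vanishes. -/
lemma sum_mul_div_sum_of_nonneg {ι : Type*} [Fintype ι] {f : ι → ℝ} (hf : ∀ i, 0 ≤ f i)
    (j : ι) : (∑ i, f i) * (f j / ∑ i, f i) = f j := by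
  rcases eq_or_ne (∑ i, f i) 0 with h | h
  · have hj : f j = 0 := (sum_eq_zero_iff_of_nonneg fun i _ => hf i).1 h j (mem_univ j)
    rw [h, hj, zero_mul]
  · exact mul_div_cancel₀ _ h

lemma sum_div_sum_le_one {ι : Type*} [Fintype ι] (f : ι → ℝ) :
    ∑ j, f j / ∑ i, f i ≤ 1 := by
  rw [← sum_div]
  exact div_self_le_one _

lemma sum_mul_le_iSup {ι : Type*} [Fintype ι] {w : ι → ℝ} (hw : ∀ i, 0 ≤ w i)
    (hw1 : ∑ i, w i = 1) (f : ι → ℝ) : ∑ i, w i * f i ≤ ⨆ i, f i := calc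
  ∑ i, w i * f i ≤ ∑ i, w i * ⨆ j, f j :=
    sum_le_sum fun i _ => mul_le_mul_of_nonneg_left
      (le_ciSup (Set.finite_range f).bddAbove i) (hw i)
  _ = ⨆ j, f j := by rw [← sum_mul, hw1, one_mul]

lemma le_iSup₂_of_le_bound {ι Y : Type*} [Finite ι] {h : ι → Y → ℝ} {C : ℝ}
    (hC : ∀ i y, h i y ≤ C) (i : ι) (y : Y) : h i y ≤ ⨆ i, ⨆ y, h i y :=
  le_ciSup_of_le (Set.finite_range _).bddAbove i
    (le_ciSup ⟨C, Set.forall_mem_range.2 (hC i)⟩ y)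

lemma abs_mul_sub_mul_le_add {A B u v : ℝ} (hA : 0 ≤ A) (hB : 0 ≤ B)
    (hu₀ : 0 ≤ u) (hu₁ : u ≤ 1) (hv₀ : 0 ≤ v) (hv₁ : v ≤ 1) :
    |A * u - B * v| ≤ A + B :=
  abs_le.2 ⟨by nlinarith, by nlinarith⟩

lemma abs_mul_mul_sub_mul_mul_le {s t A B u v : ℝ} (hs : 0 ≤ s) (hB : 0 ≤ B)
    (hv₀ : 0 ≤ v) (hv₁ : v ≤ 1) :
    |s * A * u - t * B * v| ≤ s * |A * u - B * v| + |s - t| * B := calc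
  |s * A * u - t * B * v| = |s * (A * u - B * v) + (s - t) * (B * v)| := by ring_nf
  _ ≤ |s * (A * u - B * v)| + |(s - t) * (B * v)| := abs_add_le _ _
  _ ≤ s * |A * u - B * v| + |s - t| * B := by
    rw [abs_mul, abs_mul, abs_of_nonneg hs, abs_of_nonneg (mul_nonneg hB hv₀)]
    gcongr
    exact mul_le_of_le_one_right hB hv₁

/-- The bound on a single summand `x` of `u(F, F̃)`, with `s = p_Z`, `t = p̃_Z`,
`A = p_{X|Z=·}(x)` and `B = p̃_{X|Z=·}(x)`. -/
lemma iSup_abs_sum_sub_sum_le {Z ι Y : Type*} [Fintype Z] [Finite ι]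
    {s t A B : Z → ℝ} {f g : Z → ι → Y → ℝ} (hs : ∀ z, 0 ≤ s z) (hA : ∀ z, 0 ≤ A z)
    (hB : ∀ z, 0 ≤ B z) (hf₀ : ∀ z i y, 0 ≤ f z i y) (hf₁ : ∀ z i y, f z i y ≤ 1)
    (hg₀ : ∀ z i y, 0 ≤ g z i y) (hg₁ : ∀ z i y, g z i y ≤ 1) :
    ⨆ i, ⨆ y, |∑ z, s z * A z * f z i y - ∑ z, t z * B z * g z i y|
      ≤ ∑ z, s z * (⨆ i, ⨆ y, |A z * f z i y - B z * g z i y|) + ∑ z, |s z - t z| * B z := by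
  have hbound : ∀ z i y, |A z * f z i y - B z * g z i y| ≤ A z + B z := fun z i y =>
    abs_mul_sub_mul_le_add (hA z) (hB z) (hf₀ z i y) (hf₁ z i y) (hg₀ z i y) (hg₁ z i y)
  have hsup_nonneg : ∀ z, 0 ≤ ⨆ i, ⨆ y, |A z * f z i y - B z * g z i y| := fun z =>
    Real.iSup_nonneg fun i => Real.iSup_nonneg fun y => abs_nonneg _
  have hrhs_nonneg :
      0 ≤ ∑ z, s z * (⨆ i, ⨆ y, |A z * f z i y - B z * g z i y|) + ∑ z, |s z - t z| * B z :=
    add_nonneg (sum_nonneg fun z _ => mul_nonneg (hs z) (hsup_nonneg z))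
      (sum_nonneg fun z _ => mul_nonneg (abs_nonneg _) (hB z))
  refine Real.iSup_le (fun i => Real.iSup_le (fun y => ?_) hrhs_nonneg) hrhs_nonneg
  calc |∑ z, s z * A z * f z i y - ∑ z, t z * B z * g z i y|
      ≤ ∑ z, |s z * A z * f z i y - t z * B z * g z i y| := by
        rw [← sum_sub_distrib]
        exact abs_sum_le_sum_abs _ _
    _ ≤ ∑ z, (s z * |A z * f z i y - B z * g z i y| + |s z - t z| * B z) :=
        sum_le_sum fun z _ => abs_mul_mul_sub_mul_mul_le (hs z) (hB z) (hg₀ z i y) (hg₁ z i y)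
    _ ≤ ∑ z, (s z * (⨆ i, ⨆ y, |A z * f z i y - B z * g z i y|) + |s z - t z| * B z) := by
        gcongr with z
        · exact hs z
        · exact le_iSup₂_of_le_bound (hbound z) i y
    _ = _ := sum_add_distrib

theorem stmt_7_general {X Z : Type} [Fintype X] [Fintype Z]
    (K : ℕ) (a b : ℝ)
    (F Ft : Fin K → X → Z → ℝ → ℝ)
    (hF : ∀ i x z, IsCdfOn a b (F i x z)) (hFt : ∀ i x z, IsCdfOn a b (Ft i x z))
    (p pt : X → Z → ℝ)
    (hp : ∀ x z, 0 ≤ p x z) (hpt : ∀ x z, 0 ≤ pt x z)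
    (hps : ∑ x, ∑ z, p x z = 1) :
    uDisc K F Ft p pt
        ≤ (∑ z, (∑ x, p x z) * uzDisc K F Ft p pt z) +
            ∑ z, |(∑ x, p x z) - ∑ x, pt x z| ∧
      (∑ z, (∑ x, p x z) * uzDisc K F Ft p pt z) +
            ∑ z, |(∑ x, p x z) - ∑ x, pt x z|
        ≤ (⨆ z : Z, uzDisc K F Ft p pt z) +
            ∑ z, |(∑ x, p x z) - ∑ x, pt x z| := by
  have hpZ : ∀ z, 0 ≤ ∑ x, p x z := fun z => sum_nonneg fun x _ => hp x z
  have hcond : ∀ x z, 0 ≤ pt x z / ∑ x', pt x' z := fun x z =>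
    div_nonneg (hpt x z) (sum_nonneg fun x' _ => hpt x' z)
  constructor
  · calc uDisc K F Ft p pt
        = ∑ x, ⨆ i, ⨆ y, |∑ z, (∑ x', p x' z) * (p x z / ∑ x', p x' z) * F i x z y
            - ∑ z, (∑ x', pt x' z) * (pt x z / ∑ x', pt x' z) * Ft i x z y| := by
          simp only [uDisc, sum_mul_div_sum_of_nonneg (hp · _),
            sum_mul_div_sum_of_nonneg (hpt · _)]
      _ ≤ ∑ x, (∑ z, (∑ x', p x' z) * (⨆ i, ⨆ y, |(p x z / ∑ x', p x' z) * F i x z y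
              - (pt x z / ∑ x', pt x' z) * Ft i x z y|)
            + ∑ z, |(∑ x', p x' z) - ∑ x', pt x' z| * (pt x z / ∑ x', pt x' z)) :=
          sum_le_sum fun x _ => iSup_abs_sum_sub_sum_le hpZ
            (fun z => div_nonneg (hp x z) (hpZ z)) (hcond x)
            (fun z i => (hF i x z).nonneg) (fun z i => (hF i x z).le_one)
            (fun z i => (hFt i x z).nonneg) (fun z i => (hFt i x z).le_one)
      _ = (∑ z, (∑ x, p x z) * uzDisc K F Ft p pt z)
            + ∑ z, |(∑ x, p x z) - ∑ x, pt x z| * ∑ x, pt x z / ∑ x', pt x' z := by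
          rw [sum_add_distrib]
          simp only [uzDisc, mul_sum]
          congr 1 <;> exact sum_comm
      _ ≤ _ := by
          gcongr with z
          exact mul_le_of_le_one_right (abs_nonneg _) (sum_div_sum_le_one _)
  · gcongr
    exact sum_mul_le_iSup hpZ (by rw [sum_comm, hps]) _

/-- `u(F,F̃) ≤ ∑_z p_Z(z) u_z(F,F̃) + ‖p_Z − p̃_Z‖₁ ≤ max_z u_z(F,F̃) + ‖p_Z − p̃_Z‖₁`. -/
theorem stmt_7 {X Z : Type} [Fintype X] [Nonempty X] [Fintype Z] [Nonempty Z]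
    (K : ℕ) (hK : 2 ≤ K) (a b : ℝ)
    (F Ft : Fin K → X → Z → ℝ → ℝ)
    (hF : ∀ i x z, IsCdfOn a b (F i x z)) (hFt : ∀ i x z, IsCdfOn a b (Ft i x z))
    (p pt : X → Z → ℝ)
    (hp : ∀ x z, 0 ≤ p x z) (hpt : ∀ x z, 0 ≤ pt x z)
    (hps : ∑ x, ∑ z, p x z = 1) (hpts : ∑ x, ∑ z, pt x z = 1)
    (hpZ : ∀ z, 0 < ∑ x, p x z) (hptZ : ∀ z, 0 < ∑ x, pt x z) :
    uDisc K F Ft p pt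
        ≤ (∑ z, (∑ x, p x z) * uzDisc K F Ft p pt z) +
            ∑ z, |(∑ x, p x z) - ∑ x, pt x z| ∧
      (∑ z, (∑ x, p x z) * uzDisc K F Ft p pt z) +
            ∑ z, |(∑ x, p x z) - ∑ x, pt x z|
        ≤ (⨆ z : Z, uzDisc K F Ft p pt z) +
            ∑ z, |(∑ x, p x z) - ∑ x, pt x z| :=
  stmt_7_general K a b F Ft hF hFt p pt hp hpt hps
end

section
/- Let T: D_cdf([a,b]) → ℝ satisfy |T(F) − T(G)| ≤ ‖F − G‖_∞ for all F in a convex subset 𝒟 ⊆ D_cdf([a,b]) and all G ∈ D_cdf([a,b]), and let S: D_cdf([a,b])² → [0,∞) satisfy |S(F, F̃) − S(G, G̃)| ≤ ‖F − G‖_∞ + ‖F̃ − G̃‖_∞ for (F,F̃) ∈ 𝒟² and (G,G̃) ∈ D_cdf([a,b])², with S(F,F) = 0 for all F. Fix λ ∈ [0,1], arrays F ⊏ 𝒟 and F̃ ⊏ D_cdf([a,b]) (all conditional cdfs of F lie in 𝒟), and decision rules δ, δ̃ ∈ S_K^𝒳. Define Ω_{λ,F}(δ) = (1−λ) T(⟨δ,F⟩)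 − λ max_{z∈𝒵} S(⟨δ,F⟩_z, ⟨δ,F⟩). Then |Ω_{λ,F}(δ) − Ω_{λ,F̃}(δ̃)| ≤ (1+λ)[d₁(δ, δ̃) + max_{z∈𝒵} u_z(F, F̃)] + ‖p_Z − p̃_Z‖₁. In particular, δ ↦ Ω_{λ,F}(δ) is Lipschitz continuous on S_K^𝒳 with constant 1+λ. -/
/-- Subpopulation mixture cdf `⟨δ,F⟩_z`. -/
noncomputable def mixZ {X Z : Type} [Fintype X] [Fintype Z] (K : ℕ)
    (F : Fin K → X → Z → ℝ → ℝ) (p : X → Z → ℝ) (δ : X → Fin K → ℝ) (z : Z) :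
    ℝ → ℝ :=
  fun y => ∑ x, ∑ i, δ x i * (p x z / ∑ x', p x' z) * F i x z y

/-- Population mixture cdf `⟨δ,F⟩ = ∑_z p_Z(z) ⟨δ,F⟩_z`. -/
noncomputable def mixAll {X Z : Type} [Fintype X] [Fintype Z] (K : ℕ)
    (F : Fin K → X → Z → ℝ → ℝ) (p : X → Z → ℝ) (δ : X → Fin K → ℝ) :
    ℝ → ℝ :=
  fun y => ∑ z, (∑ x, p x z) * mixZ K F p δ z y

/-- The penalized objective `Ω_{λ,F}(δ)`. -/
noncomputable def Obj {X Z : Type} [Fintype X] [Fintype Z] (K : ℕ)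
    (T : (ℝ → ℝ) → ℝ) (S : (ℝ → ℝ) → (ℝ → ℝ) → ℝ) (lam : ℝ)
    (F : Fin K → X → Z → ℝ → ℝ) (p : X → Z → ℝ) (δ : X → Fin K → ℝ) : ℝ :=
  (1 - lam) * T (mixAll K F p δ) -
    lam * ⨆ z : Z, S (mixZ K F p δ z) (mixAll K F p δ)

open Finset

lemma isCdfOn_convex (a b : ℝ) : Convex ℝ {F : ℝ → ℝ | IsCdfOn a b F} := by
  rintro f ⟨hfm, hfa, hfb, hfI⟩ g ⟨hgm, hga, hgb, hgI⟩ c d hc hd hcd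
  refine ⟨?_, fun y hy => ?_, fun y hy => ?_, fun y => ?_⟩
  · exact (hfm.const_smul hc).add (hgm.const_smul hd)
  · simp [hfa y hy, hga y hy]
  · simp [hfb y hy, hgb y hy, hcd]
  · have := hfI y; have := hgI y
    simp only [Pi.add_apply, Pi.smul_apply, smul_eq_mul]
    constructor <;> nlinarith

lemma IsCdfOn.abs_le_one {a b : ℝ} {F : ℝ → ℝ} (hF : IsCdfOn a b F) (y : ℝ) : |F y| ≤ 1 :=
  abs_le.2 ⟨by linarith [(hF.2.2.2 y).1], (hF.2.2.2 y).2⟩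

lemma Convex.sum_sum_mem {ι κ E : Type*} [Fintype ι] [Fintype κ] [AddCommGroup E] [Module ℝ E]
    {s : Set E} (hs : Convex ℝ s) {w : ι → κ → ℝ} {f : ι → κ → E}
    (h₀ : ∀ i j, 0 ≤ w i j) (h₁ : ∑ i, ∑ j, w i j = 1) (hf : ∀ i j, f i j ∈ s) :
    ∑ i, ∑ j, w i j • f i j ∈ s := by
  rw [← Fintype.sum_prod_type'] at h₁ ⊢
  exact hs.sum_mem (fun q _ => h₀ q.1 q.2) h₁ (fun q _ => hf q.1 q.2)

lemma sum_mul_le_of_mem_stdSimplex {ι : Type*} [Fintype ι] {c g : ι → ℝ} {u : ℝ}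
    (hc : c ∈ stdSimplex ℝ ι) (hg : ∀ i, g i ≤ u) : ∑ i, c i * g i ≤ u :=
  calc ∑ i, c i * g i ≤ ∑ i, c i * u :=
        sum_le_sum fun i _ => mul_le_mul_of_nonneg_left (hg i) (hc.1 i)
    _ = u := by rw [← sum_mul, hc.2, one_mul]

lemma abs_sum_mul_sub_sum_mul_le {ι : Type*} [Fintype ι] {c ct w wt : ι → ℝ}
    (hct : ∀ i, 0 ≤ ct i) (hw : ∀ i, |w i| ≤ 1) :
    |∑ i, c i * w i - ∑ i, ct i * wt i| ≤ ∑ i, |c i - ct i| + ∑ i, ct i * |w i - wt i| := by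
  rw [← sum_sub_distrib, ← sum_add_distrib]
  refine (abs_sum_le_sum_abs _ _).trans (sum_le_sum fun i _ => ?_)
  calc |c i * w i - ct i * wt i| = |(c i - ct i) * w i + ct i * (w i - wt i)| := by
        congr 1; ring
    _ ≤ |c i - ct i| * |w i| + ct i * |w i - wt i| :=
        (abs_add_le _ _).trans_eq (by rw [abs_mul, abs_mul, abs_of_nonneg (hct i)])
    _ ≤ |c i - ct i| + ct i * |w i - wt i| := by
        gcongr; exact mul_le_of_le_one_right (abs_nonneg _) (hw i)

lemma abs_ciSup_sub_ciSup_le {ι : Type*} [Finite ι] [Nonempty ι] {f g : ι → ℝ} {C : ℝ}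
    (h : ∀ i, |f i - g i| ≤ C) : |(⨆ i, f i) - ⨆ i, g i| ≤ C := by
  rw [abs_sub_le_iff, sub_le_iff_le_add, sub_le_iff_le_add]
  exact ⟨ciSup_le fun i => by linarith [(abs_sub_le_iff.1 (h i)).1, Finite.le_ciSup g i],
    ciSup_le fun i => by linarith [(abs_sub_le_iff.1 (h i)).2, Finite.le_ciSup f i]⟩

lemma le_ciSup_ciSup_of_abs_le {ι α : Type*} [Finite ι] {f : ι → α → ℝ} {C : ℝ}
    (hf : ∀ i y, |f i y| ≤ C) (i : ι) (y : α) : f i y ≤ ⨆ i, ⨆ y, f i y :=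
  (le_ciSup ⟨C, by rintro _ ⟨y, rfl⟩; exact (le_abs_self _).trans (hf i y)⟩ y).trans
    (Finite.le_ciSup (fun i => ⨆ y, f i y) i)

lemma abs_div_sum_mul_le_one {ι : Type*} [Fintype ι] {p : ι → ℝ} {G : ℝ → ℝ} {a b : ℝ}
    (hp : ∀ x, 0 ≤ p x) (hpos : 0 < ∑ x, p x) (hG : IsCdfOn a b G) (x : ι) (y : ℝ) :
    |(p x / ∑ x', p x') * G y| ≤ 1 := by
  rw [abs_mul, abs_of_nonneg (div_nonneg (hp x) hpos.le)]
  refine mul_le_one₀ ?_ (abs_nonneg _) (hG.abs_le_one y)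
  rw [div_le_one hpos]
  exact single_le_sum (fun x' _ => hp x') (mem_univ x)

section Mixtures

variable {X Z : Type} [Fintype X] [Fintype Z] {K : ℕ}

lemma mixZ_mem {D : Set (ℝ → ℝ)} (hD : Convex ℝ D) {F : Fin K → X → Z → ℝ → ℝ}
    {p : X → Z → ℝ} {δ : X → Fin K → ℝ} {z : Z} (hF : ∀ i x, F i x z ∈ D)
    (hp : ∀ x, 0 ≤ p x z) (hpZ : 0 < ∑ x, p x z) (hδ : ∀ x, δ x ∈ stdSimplex ℝ (Fin K)) :
    mixZ K F p δ z ∈ D := by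
  have heq : mixZ K F p δ z = ∑ x, ∑ i, (δ x i * (p x z / ∑ x', p x' z)) • F i x z := by
    funext y
    simp [mixZ, Finset.sum_apply]
  rw [heq]
  refine hD.sum_sum_mem (fun x i => mul_nonneg ((hδ x).1 i) (div_nonneg (hp x) hpZ.le)) ?_
    (fun x i => hF i x)
  simp_rw [← sum_mul, (hδ _).2, one_mul, ← sum_div, div_self hpZ.ne']

lemma mixAll_mem {D : Set (ℝ → ℝ)} (hD : Convex ℝ D) {F : Fin K → X → Z → ℝ → ℝ}
    {p : X → Z → ℝ} {δ : X → Fin K → ℝ} (hF : ∀ i x z, F i x z ∈ D)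
    (hp : ∀ x z, 0 ≤ p x z) (hps : ∑ x, ∑ z, p x z = 1) (hpZ : ∀ z, 0 < ∑ x, p x z)
    (hδ : ∀ x, δ x ∈ stdSimplex ℝ (Fin K)) :
    mixAll K F p δ ∈ D := by
  have heq : mixAll K F p δ = ∑ z, (∑ x, p x z) • mixZ K F p δ z := by
    funext y
    simp [mixAll, Finset.sum_apply]
  rw [heq]
  rw [sum_comm] at hps
  exact hD.sum_mem (fun z _ => (hpZ z).le) hps
    (fun z _ => mixZ_mem hD (fun i x => hF i x z) (fun x => hp x z) (hpZ z) hδ)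

lemma abs_mixZ_sub_mixZ_le {a b : ℝ} {F Ft : Fin K → X → Z → ℝ → ℝ} {p pt : X → Z → ℝ}
    {δ δt : X → Fin K → ℝ} {z : Z} (hF : ∀ i x, IsCdfOn a b (F i x z))
    (hFt : ∀ i x, IsCdfOn a b (Ft i x z)) (hp : ∀ x, 0 ≤ p x z) (hpt : ∀ x, 0 ≤ pt x z)
    (hpZ : 0 < ∑ x, p x z) (hptZ : 0 < ∑ x, pt x z) (hδt : ∀ x, δt x ∈ stdSimplex ℝ (Fin K))
    (y : ℝ) :
    |mixZ K F p δ z y - mixZ K Ft pt δt z y|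
      ≤ (∑ x, ∑ i, |δ x i - δt x i|) + uzDisc K F Ft p pt z := by
  set w : X → Fin K → ℝ → ℝ := fun x i y => (p x z / ∑ x', p x' z) * F i x z y
  set wt : X → Fin K → ℝ → ℝ := fun x i y => (pt x z / ∑ x', pt x' z) * Ft i x z y
  have hw : ∀ x i y, |w x i y| ≤ 1 := fun x i => abs_div_sum_mul_le_one (hp ·) hpZ (hF i x) x
  have hwt : ∀ x i y, |wt x i y| ≤ 1 :=
    fun x i => abs_div_sum_mul_le_one (hpt ·) hptZ (hFt i x) x
  have hu : ∀ x i, |w x i y - wt x i y| ≤ ⨆ i, ⨆ y, |w x i y - wt x i y| :=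
    fun x i => le_ciSup_ciSup_of_abs_le (C := 2) (fun i y => by
      rw [abs_abs]; linarith [abs_sub (w x i y) (wt x i y), hw x i y, hwt x i y]) i y
  calc |mixZ K F p δ z y - mixZ K Ft pt δt z y|
      = |∑ x, (∑ i, δ x i * w x i y - ∑ i, δt x i * wt x i y)| := by
        simp only [mixZ, w, wt, mul_assoc, sum_sub_distrib]
    _ ≤ ∑ x, (∑ i, |δ x i - δt x i| + ⨆ i, ⨆ y, |w x i y - wt x i y|) :=
        (abs_sum_le_sum_abs _ _).trans <| sum_le_sum fun x _ =>
          (abs_sum_mul_sub_sum_mul_le (hδt x).1 (hw x · y)).trans <|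
            add_le_add_right (sum_mul_le_of_mem_stdSimplex (hδt x) (hu x)) _
    _ = (∑ x, ∑ i, |δ x i - δt x i|) + uzDisc K F Ft p pt z := sum_add_distrib

lemma abs_mixAll_sub_mixAll_le {a b : ℝ} {F Ft : Fin K → X → Z → ℝ → ℝ}
    {p pt : X → Z → ℝ} {δ δt : X → Fin K → ℝ} (hF : ∀ i x z, IsCdfOn a b (F i x z))
    (hFt : ∀ i x z, IsCdfOn a b (Ft i x z)) (hp : ∀ x z, 0 ≤ p x z) (hpt : ∀ x z, 0 ≤ pt x z)
    (hps : ∑ x, ∑ z, p x z = 1) (hpZ : ∀ z, 0 < ∑ x, p x z) (hptZ : ∀ z, 0 < ∑ x, pt x z)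
    (hδt : ∀ x, δt x ∈ stdSimplex ℝ (Fin K)) (y : ℝ) :
    |mixAll K F p δ y - mixAll K Ft pt δt y|
      ≤ ((∑ x, ∑ i, |δ x i - δt x i|) + ⨆ z, uzDisc K F Ft p pt z)
        + ∑ z, |(∑ x, p x z) - ∑ x, pt x z| := by
  have hpZ_mem : (fun z => ∑ x, p x z) ∈ stdSimplex ℝ Z :=
    ⟨fun z => (hpZ z).le, by rw [← hps, sum_comm]⟩
  have hmt : ∀ z, |mixZ K Ft pt δt z y| ≤ 1 := fun z =>
    IsCdfOn.abs_le_one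
      (mixZ_mem (isCdfOn_convex a b) (hFt · · z) (hpt · z) (hptZ z) hδt) y
  have hdiff : ∀ z, |mixZ K Ft pt δt z y - mixZ K F p δ z y|
      ≤ (∑ x, ∑ i, |δ x i - δt x i|) + ⨆ z, uzDisc K F Ft p pt z := fun z => by
    rw [abs_sub_comm]
    exact (abs_mixZ_sub_mixZ_le (hF · · z) (hFt · · z) (hp · z) (hpt · z) (hpZ z) (hptZ z) hδt
      y).trans (add_le_add_right (Finite.le_ciSup (uzDisc K F Ft p pt) z) _)
  rw [abs_sub_comm, add_comm]
  refine (abs_sum_mul_sub_sum_mul_le hpZ_mem.1 hmt).trans (add_le_add ?_ ?_)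
  · exact (sum_congr rfl fun z _ => abs_sub_comm _ _).le
  · exact sum_mul_le_of_mem_stdSimplex hpZ_mem hdiff

end Mixtures

theorem abs_obj_sub_obj_le {X Z : Type} [Fintype X] [Fintype Z] [Nonempty Z] {K : ℕ} {a b : ℝ}
    {D : Set (ℝ → ℝ)} (hDsub : D ⊆ {G | IsCdfOn a b G}) (hDconv : Convex ℝ D)
    {T : (ℝ → ℝ) → ℝ} {S : (ℝ → ℝ) → (ℝ → ℝ) → ℝ}
    (hT : ∀ F ∈ D, ∀ G ∈ {G | IsCdfOn a b G}, |T F - T G| ≤ ⨆ y : ℝ, |F y - G y|)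
    (hS : ∀ F ∈ D, ∀ Ft ∈ D, ∀ G ∈ {G | IsCdfOn a b G}, ∀ Gt ∈ {G | IsCdfOn a b G},
      |S F Ft - S G Gt| ≤ (⨆ y : ℝ, |F y - G y|) + ⨆ y : ℝ, |Ft y - Gt y|)
    {lam : ℝ} (hlam : lam ∈ Set.Icc (0 : ℝ) 1) {F Ft : Fin K → X → Z → ℝ → ℝ}
    (hF : ∀ i x z, F i x z ∈ D) (hFt : ∀ i x z, IsCdfOn a b (Ft i x z)) {p pt : X → Z → ℝ}
    (hp : ∀ x z, 0 ≤ p x z) (hpt : ∀ x z, 0 ≤ pt x z)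
    (hps : ∑ x, ∑ z, p x z = 1) (hpts : ∑ x, ∑ z, pt x z = 1)
    (hpZ : ∀ z, 0 < ∑ x, p x z) (hptZ : ∀ z, 0 < ∑ x, pt x z) {δ δt : X → Fin K → ℝ}
    (hδ : ∀ x, δ x ∈ stdSimplex ℝ (Fin K)) (hδt : ∀ x, δt x ∈ stdSimplex ℝ (Fin K)) :
    |Obj K T S lam F p δ - Obj K T S lam Ft pt δt|
      ≤ (1 + lam) * ((∑ x, ∑ i, |δ x i - δt x i|) + ⨆ z, uzDisc K F Ft p pt z)
        + ∑ z, |(∑ x, p x z) - ∑ x, pt x z| := by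
  set A := (∑ x, ∑ i, |δ x i - δt x i|) + ⨆ z, uzDisc K F Ft p pt z
  set P := ∑ z, |(∑ x, p x z) - ∑ x, pt x z|
  have hFcdf : ∀ i x z, IsCdfOn a b (F i x z) := fun i x z => hDsub (hF i x z)
  have hmix : ⨆ y, |mixAll K F p δ y - mixAll K Ft pt δt y| ≤ A + P :=
    ciSup_le (abs_mixAll_sub_mixAll_le hFcdf hFt hp hpt hps hpZ hptZ hδt)
  have hmixZ : ∀ z, ⨆ y, |mixZ K F p δ z y - mixZ K Ft pt δt z y| ≤ A := fun z =>
    ciSup_le fun y => (abs_mixZ_sub_mixZ_le (hFcdf · · z) (hFt · · z) (hp · z) (hpt · z) (hpZ z)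
      (hptZ z) hδt y).trans (add_le_add_right (Finite.le_ciSup (uzDisc K F Ft p pt) z) _)
  have hmem : mixAll K F p δ ∈ D := mixAll_mem hDconv hF hp hps hpZ hδ
  have hmem' : mixAll K Ft pt δt ∈ {G | IsCdfOn a b G} :=
    mixAll_mem (isCdfOn_convex a b) hFt hpt hpts hptZ hδt
  have hTdiff : |T (mixAll K F p δ) - T (mixAll K Ft pt δt)| ≤ A + P :=
    (hT _ hmem _ hmem').trans hmix
  have hSdiff : |(⨆ z, S (mixZ K F p δ z) (mixAll K F p δ))
      - ⨆ z, S (mixZ K Ft pt δt z) (mixAll K Ft pt δt)| ≤ 2 * A + P :=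
    abs_ciSup_sub_ciSup_le fun z => by
      have hSz := hS _ (mixZ_mem hDconv (hF · · z) (hp · z) (hpZ z) hδ) _ hmem _
        (mixZ_mem (isCdfOn_convex a b) (hFt · · z) (hpt · z) (hptZ z) hδt) _ hmem'
      linarith [hmixZ z]
  obtain ⟨hlam0, hlam1⟩ := hlam
  calc |Obj K T S lam F p δ - Obj K T S lam Ft pt δt|
      = |(1 - lam) * (T (mixAll K F p δ) - T (mixAll K Ft pt δt))
          - lam * ((⨆ z, S (mixZ K F p δ z) (mixAll K F p δ))
            - ⨆ z, S (mixZ K Ft pt δt z) (mixAll K Ft pt δt))| := by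
        congr 1; unfold Obj; ring
    _ ≤ (1 - lam) * (A + P) + lam * (2 * A + P) := by
        refine (abs_sub _ _).trans ?_
        rw [abs_mul, abs_mul, abs_of_nonneg (sub_nonneg.2 hlam1), abs_of_nonneg hlam0]
        gcongr
    _ = (1 + lam) * A + P := by ring

theorem stmt_8_general {X Z : Type} [Fintype X] [Fintype Z] [Nonempty Z]
    (K : ℕ) (a b : ℝ)
    (Dcdf : Set (ℝ → ℝ)) (hDcdf : Dcdf = {F | IsCdfOn a b F})
    (D : Set (ℝ → ℝ)) (hDsub : D ⊆ Dcdf) (hDconv : Convex ℝ D)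
    (T : (ℝ → ℝ) → ℝ) (S : (ℝ → ℝ) → (ℝ → ℝ) → ℝ)
    (hT : ∀ F ∈ D, ∀ G ∈ Dcdf, |T F - T G| ≤ ⨆ y : ℝ, |F y - G y|)
    (hS : ∀ F ∈ D, ∀ Ft ∈ D, ∀ G ∈ Dcdf, ∀ Gt ∈ Dcdf,
      |S F Ft - S G Gt| ≤ (⨆ y : ℝ, |F y - G y|) + ⨆ y : ℝ, |Ft y - Gt y|)
    (lam : ℝ) (hlam : lam ∈ Set.Icc (0:ℝ) 1)
    (F Ft : Fin K → X → Z → ℝ → ℝ)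
    (hF : ∀ i x z, F i x z ∈ D) (hFt : ∀ i x z, Ft i x z ∈ Dcdf)
    (p pt : X → Z → ℝ)
    (hp : ∀ x z, 0 ≤ p x z) (hpt : ∀ x z, 0 ≤ pt x z)
    (hps : ∑ x, ∑ z, p x z = 1) (hpts : ∑ x, ∑ z, pt x z = 1)
    (hpZ : ∀ z, 0 < ∑ x, p x z) (hptZ : ∀ z, 0 < ∑ x, pt x z)
    (δ δt : X → Fin K → ℝ)
    (hδ : ∀ x, (∀ i, 0 ≤ δ x i) ∧ ∑ i, δ x i = 1)
    (hδt : ∀ x, (∀ i, 0 ≤ δt x i) ∧ ∑ i, δt x i = 1) :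
    |Obj K T S lam F p δ - Obj K T S lam Ft pt δt|
        ≤ (1 + lam) * ((∑ x, ∑ i, |δ x i - δt x i|) + ⨆ z : Z, uzDisc K F Ft p pt z) +
            ∑ z, |(∑ x, p x z) - ∑ x, pt x z| ∧
      ∀ δ₁ δ₂ : X → Fin K → ℝ,
        (∀ x, (∀ i, 0 ≤ δ₁ x i) ∧ ∑ i, δ₁ x i = 1) →
        (∀ x, (∀ i, 0 ≤ δ₂ x i) ∧ ∑ i, δ₂ x i = 1) →
        |Obj K T S lam F p δ₁ - Obj K T S lam F p δ₂|
          ≤ (1 + lam) * ∑ x, ∑ i, |δ₁ x i - δ₂ x i| := by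
  subst hDcdf
  refine ⟨abs_obj_sub_obj_le hDsub hDconv hT hS hlam hF hFt hp hpt hps hpts hpZ hptZ hδ hδt,
    fun δ₁ δ₂ h₁ h₂ => ?_⟩
  have h := abs_obj_sub_obj_le hDsub hDconv hT hS hlam hF (fun i x z => hDsub (hF i x z))
    hp hp hps hps hpZ hpZ h₁ h₂
  simpa [uzDisc, Real.iSup_const_zero] using h

/-- Lipschitz continuity of the penalized objective in `(δ, F)`. -/
theorem stmt_8 {X Z : Type} [Fintype X] [Nonempty X] [Fintype Z] [Nonempty Z]
    (K : ℕ) (hK : 2 ≤ K) (a b : ℝ)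
    (Dcdf : Set (ℝ → ℝ)) (hDcdf : Dcdf = {F | IsCdfOn a b F})
    (D : Set (ℝ → ℝ)) (hDsub : D ⊆ Dcdf) (hDconv : Convex ℝ D) (hDne : D.Nonempty)
    (T : (ℝ → ℝ) → ℝ) (S : (ℝ → ℝ) → (ℝ → ℝ) → ℝ)
    (hT : ∀ F ∈ D, ∀ G ∈ Dcdf, |T F - T G| ≤ ⨆ y : ℝ, |F y - G y|)
    (hS : ∀ F ∈ D, ∀ Ft ∈ D, ∀ G ∈ Dcdf, ∀ Gt ∈ Dcdf,
      |S F Ft - S G Gt| ≤ (⨆ y : ℝ, |F y - G y|) + ⨆ y : ℝ, |Ft y - Gt y|)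
    (hS0 : ∀ F, S F F = 0) (hSnn : ∀ F G, 0 ≤ S F G)
    (lam : ℝ) (hlam : lam ∈ Set.Icc (0:ℝ) 1)
    (F Ft : Fin K → X → Z → ℝ → ℝ)
    (hF : ∀ i x z, F i x z ∈ D) (hFt : ∀ i x z, Ft i x z ∈ Dcdf)
    (p pt : X → Z → ℝ)
    (hp : ∀ x z, 0 ≤ p x z) (hpt : ∀ x z, 0 ≤ pt x z)
    (hps : ∑ x, ∑ z, p x z = 1) (hpts : ∑ x, ∑ z, pt x z = 1)
    (hpZ : ∀ z, 0 < ∑ x, p x z) (hptZ : ∀ z, 0 < ∑ x, pt x z)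
    (δ δt : X → Fin K → ℝ)
    (hδ : ∀ x, (∀ i, 0 ≤ δ x i) ∧ ∑ i, δ x i = 1)
    (hδt : ∀ x, (∀ i, 0 ≤ δt x i) ∧ ∑ i, δt x i = 1) :
    |Obj K T S lam F p δ - Obj K T S lam Ft pt δt|
        ≤ (1 + lam) * ((∑ x, ∑ i, |δ x i - δt x i|) + ⨆ z : Z, uzDisc K F Ft p pt z) +
            ∑ z, |(∑ x, p x z) - ∑ x, pt x z| ∧
      ∀ δ₁ δ₂ : X → Fin K → ℝ,
        (∀ x, (∀ i, 0 ≤ δ₁ x i) ∧ ∑ i, δ₁ x i = 1) →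
        (∀ x, (∀ i, 0 ≤ δ₂ x i) ∧ ∑ i, δ₂ x i = 1) →
        |Obj K T S lam F p δ₁ - Obj K T S lam F p δ₂|
          ≤ (1 + lam) * ∑ x, ∑ i, |δ₁ x i - δ₂ x i| :=
  stmt_8_general K a b Dcdf hDcdf D hDsub hDconv T S hT hS lam hlam F Ft hF hFt p pt hp hpt hps hpts
    hpZ hptZ δ δt hδ hδt
end

section
/- Let M_{a,b} be the projection sending a non-decreasing, non-negative, càdlàg function G: ℝ → ℝ to the cdf M_{a,b}G defined by M_{a,b}G(x) = 0 for x < a, min(G(x), 1) for x ∈ [a,b], and 1 for x ≥ b. If F is a cdf supported on [a,b] (F(a−)=0, F(b)=1), then for every c ∈ ℝ, |M_{a,b}G(c) − F(c)| ≤ sup_{x∈ℝ} |G(x) − F(x)|. -/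
/-- Projection `M_{a,b}` of a non-decreasing non-negative function onto cdfs supported
on `[a,b]`: truncation at 0/1 and at the interval endpoints. -/
noncomputable def Mab (a b : ℝ) (G : ℝ → ℝ) : ℝ → ℝ :=
  fun x => if x < a then 0 else if x ≤ b then min (G x) 1 else 1

/-- The projection does not increase the pointwise distance to a cdf supported on
`[a,b]` beyond the supremum distance: for any `C` with `|G(x) − F(x)| ≤ C` for all `x`
(in particular for `C = sup_x |G(x) − F(x)|`), one has `|M_{a,b}G(c) − F(c)| ≤ C`. -/
theorem stmt_16 (a b : ℝ) (hab : a ≤ b) (G : ℝ → ℝ)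
    (hGmono : Monotone G) (hGnn : ∀ x, 0 ≤ G x)
    (F : ℝ → ℝ) (hFmono : Monotone F)
    (hFa : ∀ y, y < a → F y = 0) (hFb : ∀ y, b ≤ y → F y = 1)
    (hF01 : ∀ y, 0 ≤ F y ∧ F y ≤ 1)
    (C : ℝ) (hC : ∀ x, |G x - F x| ≤ C) :
    ∀ c : ℝ, |Mab a b G c - F c| ≤ C := by
  intro c
  have hC0 : 0 ≤ C := le_trans (abs_nonneg _) (hC 0)
  unfold Mab
  by_cases h1 : c < a
  · simp [h1, hFa c h1, hC0]
  · simp only [h1, if_false]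
    by_cases h2 : c ≤ b
    · simp only [h2, if_true]
      by_cases h3 : G c ≤ 1
      · rw [min_eq_left h3]; exact hC c
      · rw [min_eq_right (le_of_not_ge h3)]
        have hFc := (hF01 c).2
        rw [abs_of_nonneg (by linarith)]
        have := hC c
        have habs : G c - F c ≤ C := (abs_le.mp this).2
        linarith [le_of_not_ge h3]
    · simp only [h2, if_false]
      rw [hFb c (le_of_not_ge h2)]
      simpa using hC0
end
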